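/- Every nondeterministic unitary OBDD computing AND_n (the conjunction of n Boolean variables) has width at least n+1; moreover there is a nondeterministic unitary OBDD of width n+1 computing AND_n. -/

import Mathlib

open scoped BigOperators

/-- State of a nondeterministic unitary OBDD of width `d` after reading input `x`
in variable order `π`: at step `j` the unitary `U j b` is applied, where `b` is the
value of the tested variable `x_{π j}`. -/
noncomputable def nuRun {n d : ℕ} (U : Fin n → Bool → Matrix (Fin d) (Fin d) ℂ)
    (π : Equiv.Perm (Fin n)) (init : Fin d → ℂ) (x : Fin n → Bool) : Fin d → ℂ :=
  (List.ofFn fun j : Fin n => U j (x (π j))).foldl (fun v M => M.mulVec v) init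

/-- All transition matrices are unitary. -/
def IsUnitaryFamily {n d : ℕ} (U : Fin n → Bool → Matrix (Fin d) (Fin d) ℂ) : Prop :=
  ∀ j b, U j b ∈ Matrix.unitaryGroup (Fin d) ℂ

/-- The initial state is a unit vector. -/
def NormalizedInit {d : ℕ} (init : Fin d → ℂ) : Prop :=
  ∑ q, ‖init q‖ ^ 2 = 1

/-- Nondeterministic acceptance: the projection of the final state onto the
accepting subspace (spanned by the accepting basis states `acc`) is nonzero. -/
def nuAccepts {n d : ℕ} (U : Fin n → Bool → Matrix (Fin d) (Fin d) ℂ)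
    (π : Equiv.Perm (Fin n)) (init : Fin d → ℂ) (acc : Finset (Fin d))
    (x : Fin n → Bool) : Prop :=
  ∃ q ∈ acc, nuRun U π init x q ≠ 0

/-- The NUOBDD computes `f`: it accepts exactly the inputs in `f⁻¹(1)`. -/
def nuComputes {n d : ℕ} (U : Fin n → Bool → Matrix (Fin d) (Fin d) ℂ)
    (π : Equiv.Perm (Fin n)) (init : Fin d → ℂ) (acc : Finset (Fin d))
    (f : (Fin n → Bool) → Bool) : Prop :=
  ∀ x, nuAccepts U π init acc x ↔ f x = true

/-- Number of 1s in the input. -/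
def countOnes {n : ℕ} (x : Fin n → Bool) : ℕ :=
  (Finset.univ.filter fun i => x i = true).card

/-- `AND_n(σ) = 1` iff all bits of `σ` are 1. -/
def ANDn (n : ℕ) (x : Fin n → Bool) : Bool := decide (∀ i, x i = true)

/-!
Since `AND_n` is symmetric, the variable order can be taken to be the identity. Let `v k` be
the final state on the input `1^k 0^(n-k)`, for `k = 0, …, n`. For each `m`, let `S b` be the
(unitary) product of the last `n - m` steps on constant input `b`; then `L m = S true * (S false)⁻¹`
sends `v k`, for `k ≤ m`, to the final state on `1^k 0^(m-k) 1^(n-m)`, which is accepted iff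
`k = m`. So the accepting components of `L m *ᵥ ·` vanish on `v k` for `k < m` but not on `v m`,
which makes `v 0, …, v n` linearly independent in `ℂ^d`.

Conversely, a counter modulo `n + 1`, advanced by a cyclic permutation matrix on each `1`, reaches
`n` exactly on the all-ones input.
-/

open Matrix

theorem linearIndependent_of_triangular {K V W ι : Type*} [DivisionRing K] [AddCommGroup V]
    [Module K V] [AddCommGroup W] [Module K W] [LinearOrder ι] {v : ι → V}
    (φ : ι → V →ₗ[K] W) (h_lt : ∀ i j, i < j → φ j (v i) = 0) (h_self : ∀ i, φ i (v i) ≠ 0) :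
    LinearIndependent K v := by
  classical
  rw [linearIndependent_iff']
  intro s
  induction s using Finset.induction_on_max with
  | empty => simp
  | insert a s h_max ih =>
    intro g hg
    have ha : a ∉ s := fun h => lt_irrefl a (h_max a h)
    rw [Finset.sum_insert ha] at hg
    have hga : g a = 0 := by
      have h := congrArg (φ a) hg
      rw [map_add, map_sum, Finset.sum_eq_zero fun i hi => by
        rw [map_smul, h_lt i a (h_max i hi), smul_zero], add_zero, map_smul, map_zero] at h
      exact (smul_eq_zero.mp h).resolve_right (h_self a)
    rw [hga, zero_smul, zero_add] at hg
    intro i hi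
    rcases Finset.mem_insert.mp hi with rfl | hi
    · exact hga
    · exact ih g hg i hi

theorem Matrix.foldl_mulVec_eq_prod_reverse_mulVec {ι R : Type*} [Fintype ι] [DecidableEq ι]
    [CommSemiring R] (L : List (Matrix ι ι R)) (v : ι → R) :
    L.foldl (fun w M => M *ᵥ w) v = L.reverse.prod *ᵥ v := by
  induction L generalizing v with
  | nil => simp
  | cons M L ih => simp [ih, Matrix.mulVec_mulVec]

theorem Matrix.permMatrix_mem_unitaryGroup {ι R : Type*} [Fintype ι] [DecidableEq ι] [CommRing R]
    [StarRing R] (σ : Equiv.Perm ι) : σ.permMatrix R ∈ Matrix.unitaryGroup ι R := by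
  rw [Matrix.mem_unitaryGroup_iff, Matrix.star_eq_conjTranspose, Matrix.conjTranspose_permMatrix,
    ← Matrix.permMatrix_mul, inv_mul_cancel, Matrix.permMatrix_one]

theorem Matrix.permMatrix_mulVec_single {ι R : Type*} [Fintype ι] [DecidableEq ι] [CommRing R]
    (σ : Equiv.Perm ι) (a : ι) (r : R) :
    σ.permMatrix R *ᵥ Pi.single a r = Pi.single (σ.symm a) r := by
  rw [Matrix.permMatrix_mulVec, Pi.single_comp_equiv]

theorem List.lt_of_mem_take_finRange {n m : ℕ} {j : Fin n} (h : j ∈ (List.finRange n).take m) :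
    (j : ℕ) < m := by
  obtain ⟨i, hi, rfl⟩ := List.mem_take_iff_getElem.mp h
  simp only [List.getElem_finRange, Fin.val_cast]
  omega

theorem List.le_of_mem_drop_finRange {n m : ℕ} {j : Fin n} (h : j ∈ (List.finRange n).drop m) :
    m ≤ (j : ℕ) := by
  obtain ⟨i, hi, rfl⟩ := List.mem_drop_iff_getElem.mp h
  simp only [List.getElem_finRange, Fin.val_cast]
  omega

section Run

variable {n d : ℕ} (U : Fin n → Bool → Matrix (Fin d) (Fin d) ℂ) (init : Fin d → ℂ)

theorem nuAccepts_iff (π : Equiv.Perm (Fin n)) (acc : Finset (Fin d)) (x : Fin n → Bool) :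
    nuAccepts U π init acc x ↔ nuRun U π init x ∘ ((↑) : acc → Fin d) ≠ 0 := by
  simp [nuAccepts, funext_iff]

theorem nuComputes_refl_of_comp_perm {π : Equiv.Perm (Fin n)} {acc : Finset (Fin d)}
    {f : (Fin n → Bool) → Bool} (hC : nuComputes U π init acc f) (hf : ∀ x, f (x ∘ π) = f x) :
    nuComputes U (Equiv.refl _) init acc f := by
  intro x
  have h := hC (x ∘ π.symm)
  rw [← hf] at h
  simpa [nuAccepts, nuRun, Function.comp_def] using h

noncomputable def prefixState (x : Fin n → Bool) (m : ℕ) : Fin d → ℂ :=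
  (((List.finRange n).take m).map fun j => U j (x j)).foldl (fun v M => M *ᵥ v) init

noncomputable def suffixProd (x : Fin n → Bool) (m : ℕ) : Matrix (Fin d) (Fin d) ℂ :=
  (((List.finRange n).drop m).map fun j => U j (x j)).reverse.prod

theorem nuRun_refl_eq_suffixProd_mulVec_prefixState (x : Fin n → Bool) (m : ℕ) :
    nuRun U (Equiv.refl _) init x = suffixProd U x m *ᵥ prefixState U init x m := by
  rw [nuRun, List.ofFn_eq_map, ← List.take_append_drop m (List.finRange n), List.map_append,
    List.foldl_append, Matrix.foldl_mulVec_eq_prod_reverse_mulVec]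
  rfl

theorem prefixState_congr {x z : Fin n → Bool} {m : ℕ} (h : ∀ j : Fin n, (j : ℕ) < m → x j = z j) :
    prefixState U init x m = prefixState U init z m := by
  unfold prefixState
  congr 1
  exact List.map_congr_left fun j hj => by rw [h j (List.lt_of_mem_take_finRange hj)]

theorem suffixProd_congr {x z : Fin n → Bool} {m : ℕ} (h : ∀ j : Fin n, m ≤ (j : ℕ) → x j = z j) :
    suffixProd U x m = suffixProd U z m := by
  unfold suffixProd
  congr 2
  exact List.map_congr_left fun j hj => by rw [h j (List.le_of_mem_drop_finRange hj)]

theorem suffixProd_mem_unitaryGroup (hU : IsUnitaryFamily U) (x : Fin n → Bool) (m : ℕ) :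
    suffixProd U x m ∈ Matrix.unitaryGroup (Fin d) ℂ :=
  Submonoid.list_prod_mem _ fun M hM => by
    obtain ⟨j, -, rfl⟩ := List.mem_map.mp (List.mem_reverse.mp hM)
    exact hU j (x j)

theorem exists_mulVec_nuRun_eq (hU : IsUnitaryFamily U) (m : ℕ) (s t : Fin n → Bool) :
    ∃ L : Matrix (Fin d) (Fin d) ℂ, ∀ x z : Fin n → Bool,
      (∀ j : Fin n, (j : ℕ) < m → x j = z j) →
      (∀ j : Fin n, m ≤ (j : ℕ) → x j = s j ∧ z j = t j) →
      L *ᵥ nuRun U (Equiv.refl _) init x = nuRun U (Equiv.refl _) init z := by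
  refine ⟨suffixProd U t m * star (suffixProd U s m), fun x z h_pre h_suf => ?_⟩
  rw [nuRun_refl_eq_suffixProd_mulVec_prefixState U init x m,
    nuRun_refl_eq_suffixProd_mulVec_prefixState U init z m,
    suffixProd_congr U fun j hj => (h_suf j hj).1, suffixProd_congr U fun j hj => (h_suf j hj).2,
    prefixState_congr U init h_pre, Matrix.mulVec_mulVec, mul_assoc,
    Matrix.mem_unitaryGroup_iff'.mp (suffixProd_mem_unitaryGroup U hU s m), mul_one]

end Run

theorem ANDn_comp_perm {n : ℕ} (π : Equiv.Perm (Fin n)) (x : Fin n → Bool) :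
    ANDn n (x ∘ π) = ANDn n x := by
  simp only [ANDn, Function.comp_apply, decide_eq_decide]
  exact ⟨fun h i => by simpa using h (π.symm i), fun h i => h (π i)⟩

def blockWord (n k m : ℕ) : Fin n → Bool := fun j => decide ((j : ℕ) < k ∨ m ≤ j)

theorem ANDn_blockWord_self (n m : ℕ) : ANDn n (blockWord n m m) = true := by
  simp only [ANDn, blockWord, decide_eq_true_eq]
  intro j
  omega

theorem ANDn_blockWord_of_lt {n k m : ℕ} (hkm : k < m) (hmn : m ≤ n) :
    ANDn n (blockWord n k m) = false := by
  simp only [ANDn, blockWord, decide_eq_false_iff_not, decide_eq_true_eq, not_forall]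
  exact ⟨⟨k, by omega⟩, by simp [hkm]⟩

theorem add_one_le_of_nuComputes_ANDn {n d : ℕ} {U : Fin n → Bool → Matrix (Fin d) (Fin d) ℂ}
    {π : Equiv.Perm (Fin n)} {init : Fin d → ℂ} {acc : Finset (Fin d)} (hU : IsUnitaryFamily U)
    (hC : nuComputes U π init acc (ANDn n)) : n + 1 ≤ d := by
  have hC_refl := nuComputes_refl_of_comp_perm U init hC (ANDn_comp_perm π)
  set run := nuRun U (Equiv.refl _) init
  choose L hL using fun m : Fin (n + 1) =>
    exists_mulVec_nuRun_eq U init hU m (fun _ => false) (fun _ => true)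
  have hL_block : ∀ k m : Fin (n + 1), k ≤ m →
      L m *ᵥ run (blockWord n k n) = run (blockWord n k m) := by
    intro k m hkm
    refine hL m _ _ (fun j hj => ?_) (fun j hj => ?_)
    · simp only [blockWord, decide_eq_decide]
      omega
    · simp only [blockWord, decide_eq_false_iff_not, decide_eq_true_eq]
      omega
  let φ : Fin (n + 1) → (Fin d → ℂ) →ₗ[ℂ] (acc → ℂ) := fun m =>
    LinearMap.funLeft ℂ ℂ Subtype.val ∘ₗ (L m).mulVecLin
  have hφ : ∀ k m : Fin (n + 1), k ≤ m →
      (φ m (run (blockWord n k n)) ≠ 0 ↔ ANDn n (blockWord n k m) = true) := by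
    intro k m hkm
    rw [← hC_refl, nuAccepts_iff]
    simp [φ, LinearMap.funLeft, hL_block k m hkm, run]
  have h_indep : LinearIndependent ℂ fun k : Fin (n + 1) => run (blockWord n k n) := by
    refine linearIndependent_of_triangular φ (fun k m hkm => ?_) (fun m => ?_)
    · simpa [ANDn_blockWord_of_lt hkm (Nat.lt_succ_iff.mp m.isLt)] using hφ k m hkm.le
    · exact (hφ m m le_rfl).mpr (ANDn_blockWord_self n m)
  simpa using h_indep.fintype_card_le_finrank

section Counter

open Fin.NatCast

variable {n : ℕ}

noncomputable def counterStep (n : ℕ) (b : Bool) : Matrix (Fin (n + 1)) (Fin (n + 1)) ℂ :=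
  if b then Equiv.Perm.permMatrix ℂ (finRotate (n + 1)).symm else 1

theorem counterStep_mem_unitaryGroup (b : Bool) :
    counterStep n b ∈ Matrix.unitaryGroup (Fin (n + 1)) ℂ := by
  cases b
  · rw [counterStep, if_neg Bool.false_ne_true]
    exact Submonoid.one_mem _
  · rw [counterStep, if_pos rfl]
    exact Matrix.permMatrix_mem_unitaryGroup _

theorem foldl_counterStep (bs : List Bool) (a : Fin (n + 1)) :
    (bs.map (counterStep n)).foldl (fun v M => M *ᵥ v) (Pi.single a 1)
      = Pi.single (a + (bs.count true : Fin (n + 1))) 1 := by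
  induction bs generalizing a with
  | nil => simp
  | cons b bs ih =>
    rw [List.map_cons, List.foldl_cons]
    cases b
    · rw [counterStep, if_neg Bool.false_ne_true, Matrix.one_mulVec, ih]
      simp
    · rw [counterStep, if_pos rfl, Matrix.permMatrix_mulVec_single, Equiv.symm_symm,
        finRotate_apply, ih, List.count_cons_self, Nat.cast_succ, add_right_comm, add_assoc]

theorem List.count_ofFn_eq_iff {α : Type*} [BEq α] [LawfulBEq α] (f : Fin n → α) (a : α) :
    (List.ofFn f).count a = n ↔ ∀ i, f i = a := by
  calc (List.ofFn f).count a = n ↔ (List.ofFn f).count a = (List.ofFn f).length := by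
        rw [List.length_ofFn]
    _ ↔ ∀ b ∈ List.ofFn f, a = b := List.count_eq_length
    _ ↔ ∀ i, f i = a := by simp [eq_comm]

theorem Fin.natCast_eq_last_iff {c : ℕ} (hc : c ≤ n) : (c : Fin (n + 1)) = Fin.last n ↔ c = n := by
  rw [Fin.ext_iff, Fin.val_natCast, Fin.val_last, Nat.mod_eq_of_lt (Nat.lt_succ_of_le hc)]

theorem nuComputes_counterStep_ANDn :
    nuComputes (fun _ => counterStep n) (Equiv.refl _) (Pi.single 0 1) {Fin.last n} (ANDn n) := by
  intro x
  have h_run : nuRun (fun _ => counterStep n) (Equiv.refl _) (Pi.single 0 1) x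
      = Pi.single ((List.ofFn x).count true : Fin (n + 1)) 1 := by
    rw [nuRun, ← zero_add ((List.ofFn x).count true : Fin (n + 1)), ← foldl_counterStep,
      List.map_ofFn]
    rfl
  have h_le : (List.ofFn x).count true ≤ n := List.count_le_length.trans List.length_ofFn.le
  simp only [nuAccepts, h_run, Finset.mem_singleton, exists_eq_left, Pi.single_apply,
    ne_eq, ite_eq_right_iff, one_ne_zero, imp_false, not_not, eq_comm (a := Fin.last n),
    Fin.natCast_eq_last_iff h_le, ANDn, decide_eq_true_eq]
  exact List.count_ofFn_eq_iff x true

end Counter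

theorem normalizedInit_single {d : ℕ} (a : Fin d) : NormalizedInit (Pi.single a (1 : ℂ)) := by
  simp [NormalizedInit, Pi.single_apply, apply_ite (fun z : ℂ => ‖z‖ ^ 2)]

theorem exists_nuComputes_ANDn (n : ℕ) :
    ∃ (U : Fin n → Bool → Matrix (Fin (n + 1)) (Fin (n + 1)) ℂ)
      (π : Equiv.Perm (Fin n)) (init : Fin (n + 1) → ℂ) (acc : Finset (Fin (n + 1))),
      IsUnitaryFamily U ∧ NormalizedInit init ∧ nuComputes U π init acc (ANDn n) :=
  ⟨fun _ => counterStep n, Equiv.refl _, Pi.single 0 1, {Fin.last n},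
    fun _ => counterStep_mem_unitaryGroup, normalizedInit_single 0, nuComputes_counterStep_ANDn⟩

/-- Every nondeterministic unitary OBDD computing `AND_n` has width at least
`n + 1`; moreover there is a nondeterministic unitary OBDD of width `n + 1`
computing `AND_n`. -/
theorem nuobdd_and_bounds (n : ℕ) :
    (∀ (d : ℕ) (U : Fin n → Bool → Matrix (Fin d) (Fin d) ℂ)
      (π : Equiv.Perm (Fin n)) (init : Fin d → ℂ) (acc : Finset (Fin d)),
      IsUnitaryFamily U → NormalizedInit init →
      nuComputes U π init acc (ANDn n) → n + 1 ≤ d) ∧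
    (∃ (U : Fin n → Bool → Matrix (Fin (n + 1)) (Fin (n + 1)) ℂ)
      (π : Equiv.Perm (Fin n)) (init : Fin (n + 1) → ℂ)
      (acc : Finset (Fin (n + 1))),
      IsUnitaryFamily U ∧ NormalizedInit init ∧
      nuComputes U π init acc (ANDn n)) :=
  ⟨fun _ _ _ _ _ hU _ hC => add_one_le_of_nuComputes_ANDn hU hC, exists_nuComputes_ANDn n⟩
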